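/- Let ‖·‖ be a norm on ℝ^d with dual norm ‖·‖_*, and for a d×d matrix H let ‖H‖ := max_{‖x‖ ≤ 1} ‖H x‖_*. Let f : ℝ^d → ℝ be twice continuously differentiable and (L⁰, L¹)-relaxed smooth with respect to ‖·‖, i.e. ‖∇²f(x)‖ ≤ L⁰ + L¹ ‖∇f(x)‖_* for all x, with L⁰ ≥ 0 and L¹ > 0. Then for any x, x' ∈ ℝ^d with ‖x' − x‖ ≤ 1/L¹, one has f(x') ≤ f(x) + ⟨∇f(x), x' − x⟩ + (1/2) (5 L⁰ + 4 L¹ ‖∇f(x)‖_*) ‖x' − x‖². -/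

import Mathlib

open scoped BigOperators

/-- The dual norm of a norm `N` on `ℝ^d`: `‖z‖_* = sup_{N x ≤ 1} ⟪z, x⟫`. -/
noncomputable def dualNorm {d : ℕ} (N : EuclideanSpace ℝ (Fin d) → ℝ)
    (z : EuclideanSpace ℝ (Fin d)) : ℝ :=
  sSup ((fun x => (inner ℝ z x : ℝ)) '' {x | N x ≤ 1})

/-- The matrix norm induced by a norm `N` on `ℝ^d`: `‖H‖ = max_{N x ≤ 1} ‖H x‖_*`,
for a linear map `H` on `ℝ^d`. -/
noncomputable def inducedMatrixNorm {d : ℕ} (N : EuclideanSpace ℝ (Fin d) → ℝ)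
    (H : EuclideanSpace ℝ (Fin d) →L[ℝ] EuclideanSpace ℝ (Fin d)) : ℝ :=
  sSup ((fun x => dualNorm N (H x)) '' {x | N x ≤ 1})

/-!
Along the segment `x + t • δ`, `δ = x' - x`, relaxed smoothness bounds the rate of change of
`g t = ‖∇f (x + t • δ)‖_*` by `(L⁰ + L¹ g) N δ`, a rate depending on `g` itself. Since
`L¹ N δ ≤ 1`, on an interval of length `1/2` the maximum of `g` can absorb its own contribution:
`g ≤ 2 g 0 + L⁰ N δ` on `[0, 1/2]`, and then `g ≤ 4 g 0 + 3 L⁰ N δ` on `[0, 1]`. Hence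
`‖∇f (x + t • δ) - ∇f x‖_* ≤ t (4 L⁰ + 4 L¹ g 0) N δ`, and comparing `t ↦ f (x + t • δ)` with
the parabola of slope `⟪∇f x, δ⟫ + t (4 L⁰ + 4 L¹ g 0) (N δ)²` gives the bound. In finite
dimension `N` dominates a multiple of the Euclidean norm, which keeps the suprema defining the
dual and induced norms finite.
-/

open Set
open scoped NNReal

theorem Seminorm.exists_norm_le_mul {E : Type*} [NormedAddCommGroup E] [NormedSpace ℝ E]
    [FiniteDimensional ℝ E] (p : Seminorm ℝ E) (hp : ∀ x, p x = 0 → x = 0) :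
    ∃ C : ℝ≥0, ∀ x, ‖x‖ ≤ C * p x := by
  have hcont : Continuous p := p.convexOn.locallyLipschitz.continuous
  obtain ⟨c, hc, hcp⟩ := (isCompact_sphere (0 : E) 1).exists_forall_le' hcont.continuousOn
    (a := 0) fun x hx => (apply_nonneg p x).lt_of_ne fun h => by simp [hp x h.symm] at hx
  refine ⟨c⁻¹.toNNReal, fun x => ?_⟩
  rcases eq_or_ne x 0 with rfl | hx
  · simp
  have hnx : 0 < ‖x‖ := norm_pos_iff.2 hx
  have hunit := hcp (‖x‖⁻¹ • x) (by simp [norm_smul, hnx.ne'])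
  rw [map_smul_eq_mul, norm_inv, norm_norm, inv_mul_eq_div, le_div_iff₀ hnx, mul_comm] at hunit
  rwa [Real.coe_toNNReal _ (inv_pos.2 hc).le, inv_mul_eq_div, le_div_iff₀ hc]

section NormLeMul

variable {E : Type*} [NormedAddCommGroup E] [Module ℝ E] {p : Seminorm ℝ E} {C : ℝ}

theorem Seminorm.eq_zero_of_norm_le_mul (hp : ∀ x, ‖x‖ ≤ C * p x) (x : E) (hx : p x = 0) :
    x = 0 :=
  norm_eq_zero.1 (le_antisymm (by simpa [hx] using hp x) (norm_nonneg x))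

theorem Seminorm.norm_le_of_le_one (hp : ∀ x, ‖x‖ ≤ C * p x) (hC : 0 ≤ C) {x : E}
    (hx : p x ≤ 1) : ‖x‖ ≤ C :=
  (hp x).trans (mul_le_of_le_one_right hC hx)

end NormLeMul

theorem Seminorm.le_mul_of_forall_le_one {E : Type*} [AddCommGroup E] [Module ℝ E]
    (p : Seminorm ℝ E) (hp : ∀ x, p x = 0 → x = 0) (φ : E →ₗ[ℝ] ℝ) {M : ℝ}
    (h : ∀ x, p x ≤ 1 → φ x ≤ M) (v : E) : φ v ≤ M * p v := by
  rcases eq_or_ne v 0 with rfl | hv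
  · simp
  have hpv : 0 < p v := (apply_nonneg p v).lt_of_ne fun h => hv (hp v h.symm)
  have hunit := h ((p v)⁻¹ • v) (by
    rw [map_smul_eq_mul, norm_inv, Real.norm_of_nonneg hpv.le, inv_mul_cancel₀ hpv.ne'])
  rw [map_smul, smul_eq_mul, inv_mul_le_iff₀ hpv] at hunit
  linarith

theorem ContDiff.gradient {E : Type*} [NormedAddCommGroup E] [InnerProductSpace ℝ E]
    [CompleteSpace E] {f : E → ℝ} {n : WithTop ℕ∞} (hf : ContDiff ℝ (n + 1) f) :
    ContDiff ℝ n (gradient f) :=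
  (InnerProductSpace.toDual ℝ E).symm.toLinearIsometry.toContinuousLinearMap.contDiff.comp
    (hf.fderiv_right le_rfl)

theorem HasFDerivAt.hasDerivAt_comp_add_smul {E F : Type*} [NormedAddCommGroup E]
    [NormedSpace ℝ E] [NormedAddCommGroup F] [NormedSpace ℝ F] {φ : E → F} {φ' : E →L[ℝ] F}
    {x δ : E} {t : ℝ} (h : HasFDerivAt φ φ' (x + t • δ)) :
    HasDerivAt (fun s : ℝ => φ (x + s • δ)) (φ' δ) t := by
  have := h.comp_hasDerivAt t (((hasDerivAt_id t).smul_const δ).const_add x)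
  simpa [Function.comp_def] using this

theorem le_add_deriv_add_half_of_deriv_sub_le {φ φ' : ℝ → ℝ} {K : ℝ}
    (hφ : ∀ t ∈ Icc (0 : ℝ) 1, HasDerivAt φ (φ' t) t)
    (hK : ∀ t ∈ Ico (0 : ℝ) 1, φ' t - φ' 0 ≤ K * t) :
    φ 1 ≤ φ 0 + φ' 0 + K / 2 := by
  have hB (t : ℝ) : HasDerivAt (fun t => φ 0 + φ' 0 * t + K / 2 * t ^ 2) (φ' 0 + K * t) t := by
    refine ((((hasDerivAt_id' t).const_mul (φ' 0)).const_add (φ 0)).add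
      ((hasDerivAt_pow 2 t).const_mul (K / 2))).congr_deriv ?_
    norm_num
    ring
  have := image_le_of_deriv_right_le_deriv_boundary (a := 0) (b := 1)
    (fun t ht => (hφ t ht).continuousAt.continuousWithinAt)
    (fun t ht => (hφ t (Ico_subset_Icc_self ht)).hasDerivWithinAt) (by simp)
    (fun t _ => (hB t).continuousAt.continuousWithinAt) (fun t _ => (hB t).hasDerivWithinAt)
    (fun t ht => by linarith [hK t ht]) (right_mem_Icc.2 zero_le_one)
  simpa using this

theorem le_two_mul_add_of_forall_le_add_mul {g : ℝ → ℝ} {s t a b : ℝ} (hst : s ≤ t)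
    (hg : ContinuousOn g (Icc s t)) (hgs : 0 ≤ g s) (ha : 0 ≤ a) (hb : 0 ≤ b)
    (hta : (t - s) * a ≤ 1 / 2)
    (h : ∀ τ ∈ Icc s t, ∀ G, (∀ σ ∈ Icc s τ, g σ ≤ G) → g τ ≤ g s + (τ - s) * (b + a * G)) :
    ∀ τ ∈ Icc s t, g τ ≤ 2 * g s + 2 * (t - s) * b := by
  obtain ⟨m, hm, hmax⟩ := isCompact_Icc.exists_isMaxOn (nonempty_Icc.2 hst) hg
  have hle : ∀ σ ∈ Icc s t, g σ ≤ g m := fun σ hσ => hmax hσ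
  have hM : g m ≤ g s + (m - s) * (b + a * g m) :=
    h m hm (g m) fun σ hσ => hle σ ⟨hσ.1, hσ.2.trans hm.2⟩
  have hgm : 0 ≤ g m := hgs.trans (hle s (left_mem_Icc.2 hst))
  have hms : (m - s) * (b + a * g m) ≤ (t - s) * b + 1 / 2 * g m := by
    nlinarith [mul_le_mul_of_nonneg_right hm.2 (add_nonneg hb (mul_nonneg ha hgm)), hm.1]
  intro τ hτ
  linarith [hle τ hτ]

theorem le_four_mul_add_of_forall_le_add_mul {g : ℝ → ℝ} {a b : ℝ}
    (hg : ContinuousOn g (Icc 0 1)) (hg0 : ∀ τ ∈ Icc (0 : ℝ) 1, 0 ≤ g τ) (ha : 0 ≤ a)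
    (ha1 : a ≤ 1) (hb : 0 ≤ b)
    (h : ∀ s ∈ Icc (0 : ℝ) 1, ∀ t ∈ Icc s 1, ∀ G, (∀ σ ∈ Icc s t, g σ ≤ G) →
      g t ≤ g s + (t - s) * (b + a * G)) :
    ∀ τ ∈ Icc (0 : ℝ) 1, g τ ≤ 4 * g 0 + 3 * b := by
  have hhalf : (1 / 2 : ℝ) ∈ Icc 0 1 := by norm_num
  have hleft := le_two_mul_add_of_forall_le_add_mul (by norm_num)
    (hg.mono (Icc_subset_Icc_right hhalf.2)) (hg0 0 (by norm_num)) ha hb (by linarith)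
    fun τ hτ => h 0 (by norm_num) τ ⟨hτ.1, hτ.2.trans hhalf.2⟩
  have hright := le_two_mul_add_of_forall_le_add_mul hhalf.2
    (hg.mono (Icc_subset_Icc_left hhalf.1)) (hg0 _ hhalf) ha hb (by linarith)
    fun τ hτ => h _ hhalf τ hτ
  have hg_half := hleft (1 / 2) (right_mem_Icc.2 hhalf.1)
  intro τ hτ
  rcases le_total τ (1 / 2) with hτ' | hτ'
  · linarith [hleft τ ⟨hτ.1, hτ'⟩, hg0 0 (by norm_num)]
  · linarith [hright τ ⟨hτ', hτ.2⟩]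

section DualNorm

variable {d : ℕ} {p : Seminorm ℝ (EuclideanSpace ℝ (Fin d))} {C : ℝ≥0}

theorem inner_le_dualNorm (hp : ∀ x, ‖x‖ ≤ C * p x) (z : EuclideanSpace ℝ (Fin d))
    {x : EuclideanSpace ℝ (Fin d)} (hx : p x ≤ 1) : inner ℝ z x ≤ dualNorm p z := by
  refine le_csSup ⟨‖z‖ * C, ?_⟩ ⟨x, hx, rfl⟩
  rintro _ ⟨y, hy, rfl⟩
  calc inner ℝ z y ≤ ‖z‖ * ‖y‖ := real_inner_le_norm z y
    _ ≤ ‖z‖ * C := by gcongr; exact p.norm_le_of_le_one hp C.2 hy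

theorem dualNorm_le {z : EuclideanSpace ℝ (Fin d)} {B : ℝ}
    (h : ∀ x, p x ≤ 1 → inner ℝ z x ≤ B) : dualNorm p z ≤ B :=
  csSup_le ⟨_, 0, by simp, rfl⟩ fun _ ⟨x, hx, hxz⟩ => hxz ▸ h x hx

theorem dualNorm_nonneg (hp : ∀ x, ‖x‖ ≤ C * p x) (z : EuclideanSpace ℝ (Fin d)) :
    0 ≤ dualNorm p z := by
  simpa using inner_le_dualNorm hp z (x := 0) (by simp)

theorem dualNorm_add_le (hp : ∀ x, ‖x‖ ≤ C * p x) (a b : EuclideanSpace ℝ (Fin d)) :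
    dualNorm p (a + b) ≤ dualNorm p a + dualNorm p b :=
  dualNorm_le fun x hx => by
    rw [inner_add_left]
    exact add_le_add (inner_le_dualNorm hp a hx) (inner_le_dualNorm hp b hx)

theorem dualNorm_le_mul_norm (hp : ∀ x, ‖x‖ ≤ C * p x) (z : EuclideanSpace ℝ (Fin d)) :
    dualNorm p z ≤ C * ‖z‖ :=
  dualNorm_le fun x hx => by
    calc inner ℝ z x ≤ ‖z‖ * ‖x‖ := real_inner_le_norm z x
      _ ≤ ‖z‖ * C := by gcongr; exact p.norm_le_of_le_one hp C.2 hx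
      _ = C * ‖z‖ := mul_comm _ _

theorem lipschitzWith_dualNorm (hp : ∀ x, ‖x‖ ≤ C * p x) : LipschitzWith C (dualNorm p) :=
  LipschitzWith.of_le_add_mul C fun a b => by
    calc dualNorm p a = dualNorm p (b + (a - b)) := by rw [add_sub_cancel]
      _ ≤ dualNorm p b + C * ‖a - b‖ :=
        (dualNorm_add_le hp b _).trans (add_le_add_right (dualNorm_le_mul_norm hp _) _)
      _ = dualNorm p b + C * dist a b := by rw [dist_eq_norm]

theorem inner_le_dualNorm_mul (hp : ∀ x, ‖x‖ ≤ C * p x) (z v : EuclideanSpace ℝ (Fin d)) :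
    inner ℝ z v ≤ dualNorm p z * p v :=
  p.le_mul_of_forall_le_one (p.eq_zero_of_norm_le_mul hp)
    (innerₗ (EuclideanSpace ℝ (Fin d)) z) (fun _ => inner_le_dualNorm hp z) v

theorem dualNorm_le_inducedMatrixNorm (hp : ∀ x, ‖x‖ ≤ C * p x)
    (H : EuclideanSpace ℝ (Fin d) →L[ℝ] EuclideanSpace ℝ (Fin d))
    {x : EuclideanSpace ℝ (Fin d)} (hx : p x ≤ 1) :
    dualNorm p (H x) ≤ inducedMatrixNorm p H := by
  refine le_csSup ⟨C * (‖H‖ * C), ?_⟩ ⟨x, hx, rfl⟩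
  rintro _ ⟨y, hy, rfl⟩
  calc dualNorm p (H y) ≤ C * ‖H y‖ := dualNorm_le_mul_norm hp _
    _ ≤ C * (‖H‖ * ‖y‖) := by gcongr; exact H.le_opNorm y
    _ ≤ C * (‖H‖ * C) := by gcongr; exact p.norm_le_of_le_one hp C.2 hy

theorem dualNorm_apply_le_inducedMatrixNorm_mul (hp : ∀ x, ‖x‖ ≤ C * p x)
    (H : EuclideanSpace ℝ (Fin d) →L[ℝ] EuclideanSpace ℝ (Fin d))
    (v : EuclideanSpace ℝ (Fin d)) : dualNorm p (H v) ≤ inducedMatrixNorm p H * p v :=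
  dualNorm_le fun x hx => by
    have := p.le_mul_of_forall_le_one (p.eq_zero_of_norm_le_mul hp)
      ((innerₗ (EuclideanSpace ℝ (Fin d)) x).comp H.toLinearMap)
      (fun y hy => by
        simpa [real_inner_comm] using
          (inner_le_dualNorm hp (H y) hx).trans (dualNorm_le_inducedMatrixNorm hp H hy)) v
    simpa [real_inner_comm] using this

theorem dualNorm_sub_le_of_hasDerivAt (hp : ∀ x, ‖x‖ ≤ C * p x)
    {u u' : ℝ → EuclideanSpace ℝ (Fin d)} {s t B : ℝ} (hst : s ≤ t)
    (hu : ∀ τ ∈ Icc s t, HasDerivAt u (u' τ) τ) (hB : ∀ τ ∈ Ico s t, dualNorm p (u' τ) ≤ B) :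
    dualNorm p (u t - u s) ≤ B * (t - s) :=
  dualNorm_le fun x hx => by
    have hφ (τ : ℝ) (hτ : τ ∈ Icc s t) :
        HasDerivAt (fun τ => inner ℝ (u τ) x) (inner ℝ (u' τ) x) τ :=
      ((hu τ hτ).inner ℝ (hasDerivAt_const τ x)).congr_deriv (by simp)
    have hB' (τ : ℝ) : HasDerivAt (fun τ => inner ℝ (u s) x + B * (τ - s)) B τ :=
      ((((hasDerivAt_id' τ).sub_const s).const_mul B).const_add _).congr_deriv (mul_one B)
    have := image_le_of_deriv_right_le_deriv_boundary
      (fun τ hτ => (hφ τ hτ).continuousAt.continuousWithinAt)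
      (fun τ hτ => (hφ τ (Ico_subset_Icc_self hτ)).hasDerivWithinAt) (by simp)
      (fun τ _ => (hB' τ).continuousAt.continuousWithinAt) (fun τ _ => (hB' τ).hasDerivWithinAt)
      (fun τ hτ => (inner_le_dualNorm hp _ hx).trans (hB τ hτ)) (right_mem_Icc.2 hst)
    rw [inner_sub_left]
    linarith

end DualNorm

def RelaxedSmooth {d : ℕ} (N : EuclideanSpace ℝ (Fin d) → ℝ) (L0 L1 : ℝ)
    (f : EuclideanSpace ℝ (Fin d) → ℝ) : Prop :=
  ∀ x, inducedMatrixNorm N (fderiv ℝ (gradient f) x) ≤ L0 + L1 * dualNorm N (gradient f x)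

namespace RelaxedSmooth

variable {d : ℕ} {p : Seminorm ℝ (EuclideanSpace ℝ (Fin d))} {C : ℝ≥0}
  {f : EuclideanSpace ℝ (Fin d) → ℝ} {L0 L1 : ℝ}

theorem dualNorm_gradient_sub_le (hrelax : RelaxedSmooth p L0 L1 f)
    (hp : ∀ x, ‖x‖ ≤ C * p x) (hf : ContDiff ℝ 2 f) (hL1 : 0 ≤ L1)
    (x δ : EuclideanSpace ℝ (Fin d)) {s t G : ℝ} (hst : s ≤ t)
    (hG : ∀ σ ∈ Icc s t, dualNorm p (gradient f (x + σ • δ)) ≤ G) :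
    dualNorm p (gradient f (x + t • δ) - gradient f (x + s • δ)) ≤
      (L0 + L1 * G) * p δ * (t - s) := by
  have hgrad : ContDiff ℝ 1 (gradient f) := hf.gradient
  refine dualNorm_sub_le_of_hasDerivAt (u := fun σ => gradient f (x + σ • δ)) hp hst
    (fun τ _ => (hgrad.differentiable one_ne_zero _).hasFDerivAt.hasDerivAt_comp_add_smul)
    fun τ hτ => ?_
  calc dualNorm p (fderiv ℝ (gradient f) (x + τ • δ) δ)
      ≤ inducedMatrixNorm p (fderiv ℝ (gradient f) (x + τ • δ)) * p δ :=
        dualNorm_apply_le_inducedMatrixNorm_mul hp _ δ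
    _ ≤ (L0 + L1 * G) * p δ := by
        gcongr
        exact (hrelax _).trans (by gcongr; exact hG τ (Ico_subset_Icc_self hτ))

theorem dualNorm_gradient_add_smul_le (hrelax : RelaxedSmooth p L0 L1 f)
    (hp : ∀ x, ‖x‖ ≤ C * p x) (hf : ContDiff ℝ 2 f) (hL0 : 0 ≤ L0) (hL1 : 0 ≤ L1)
    (x δ : EuclideanSpace ℝ (Fin d)) (hδ : L1 * p δ ≤ 1) :
    ∀ τ ∈ Icc (0 : ℝ) 1,
      dualNorm p (gradient f (x + τ • δ)) ≤ 4 * dualNorm p (gradient f x) + 3 * (L0 * p δ) := by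
  have hcont : Continuous fun τ : ℝ => dualNorm p (gradient f (x + τ • δ)) :=
    (lipschitzWith_dualNorm hp).continuous.comp
      ((hf.gradient (n := 1)).continuous.comp (by fun_prop))
  simpa using le_four_mul_add_of_forall_le_add_mul hcont.continuousOn
    (fun τ _ => dualNorm_nonneg hp _) (by positivity) hδ (by positivity)
    fun s _ t ht G hG => calc
      dualNorm p (gradient f (x + t • δ))
          = dualNorm p (gradient f (x + s • δ) +
              (gradient f (x + t • δ) - gradient f (x + s • δ))) := by rw [add_sub_cancel]
      _ ≤ dualNorm p (gradient f (x + s • δ)) + (L0 + L1 * G) * p δ * (t - s) :=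
          (dualNorm_add_le hp _ _).trans
            (by gcongr; exact hrelax.dualNorm_gradient_sub_le hp hf hL1 x δ ht.1 hG)
      _ = _ := by ring

theorem le_add_inner_add_mul_sq (hrelax : RelaxedSmooth p L0 L1 f)
    (hp : ∀ x, ‖x‖ ≤ C * p x) (hf : ContDiff ℝ 2 f) (hL0 : 0 ≤ L0) (hL1 : 0 ≤ L1)
    (x x' : EuclideanSpace ℝ (Fin d)) (hδ : L1 * p (x' - x) ≤ 1) :
    f x' ≤ f x + inner ℝ (gradient f x) (x' - x)
      + 1 / 2 * (5 * L0 + 4 * L1 * dualNorm p (gradient f x)) * p (x' - x) ^ 2 := by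
  set δ := x' - x
  set g₀ := dualNorm p (gradient f x)
  have hφ (t : ℝ) :
      HasDerivAt (fun t => f (x + t • δ)) (inner ℝ (gradient f (x + t • δ)) δ) t := by
    have := (hf.differentiable two_ne_zero (x + t • δ)).hasGradientAt.hasFDerivAt
    simpa using this.hasDerivAt_comp_add_smul
  have hbound := hrelax.dualNorm_gradient_add_smul_le hp hf hL0 hL1 x δ hδ
  have hK (t : ℝ) (ht : t ∈ Ico (0 : ℝ) 1) :
      inner ℝ (gradient f (x + t • δ)) δ - inner ℝ (gradient f (x + (0 : ℝ) • δ)) δ ≤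
        (4 * L0 + 4 * L1 * g₀) * p δ ^ 2 * t := by
    have hsub := hrelax.dualNorm_gradient_sub_le hp hf hL1 x δ ht.1
      fun σ hσ => hbound σ ⟨hσ.1, hσ.2.trans ht.2.le⟩
    have hrate : L0 + L1 * (4 * g₀ + 3 * (L0 * p δ)) ≤ 4 * L0 + 4 * L1 * g₀ := by
      nlinarith [mul_le_mul_of_nonneg_left hδ hL0]
    rw [← inner_sub_left]
    calc _ ≤ _ := inner_le_dualNorm_mul hp _ δ
      _ ≤ (L0 + L1 * (4 * g₀ + 3 * (L0 * p δ))) * p δ * (t - 0) * p δ := by gcongr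
      _ ≤ (4 * L0 + 4 * L1 * g₀) * p δ * t * p δ := by rw [sub_zero]; gcongr; exact ht.1
      _ = _ := by ring
  have := le_add_deriv_add_half_of_deriv_sub_le (fun t _ => hφ t) hK
  simp only [zero_smul, add_zero, one_smul, δ, add_sub_cancel] at this
  nlinarith [sq_nonneg (p δ)]

end RelaxedSmooth

/-- If `f` is twice continuously differentiable and `(L⁰, L¹)`-relaxed smooth w.r.t. a norm
`N`, then for `N(x' - x) ≤ 1/L¹` one has the local quadratic bound
`f(x') ≤ f(x) + ⟪∇f(x), x' - x⟫ + (1/2)(5L⁰ + 4L¹ ‖∇f(x)‖_*) N(x' - x)²`. -/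
theorem relaxed_smoothness_quadratic_bound {d : ℕ}
    (N : EuclideanSpace ℝ (Fin d) → ℝ)
    (hN_def : ∀ x, N x = 0 ↔ x = 0)
    (hN_smul : ∀ (c : ℝ) x, N (c • x) = |c| * N x)
    (hN_add : ∀ x y, N (x + y) ≤ N x + N y)
    (f : EuclideanSpace ℝ (Fin d) → ℝ) (hf : ContDiff ℝ 2 f)
    (L0 L1 : ℝ) (hL0 : 0 ≤ L0) (hL1 : 0 < L1)
    (hrelax : ∀ x, inducedMatrixNorm N (fderiv ℝ (gradient f) x)
      ≤ L0 + L1 * dualNorm N (gradient f x)) :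
    ∀ x x' : EuclideanSpace ℝ (Fin d), N (x' - x) ≤ 1 / L1 →
      f x' ≤ f x + (inner ℝ (gradient f x) (x' - x) : ℝ)
        + 1 / 2 * (5 * L0 + 4 * L1 * dualNorm N (gradient f x)) * (N (x' - x)) ^ 2 := by
  intro x x' hxx'
  let p : Seminorm ℝ (EuclideanSpace ℝ (Fin d)) :=
    Seminorm.of N hN_add fun c x => by rw [hN_smul, Real.norm_eq_abs]
  obtain ⟨C, hC⟩ := p.exists_norm_le_mul fun x => (hN_def x).1
  have hδ : L1 * N (x' - x) ≤ 1 := by rwa [le_div_iff₀' hL1] at hxx'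
  exact RelaxedSmooth.le_add_inner_add_mul_sq (p := p) hrelax hC hf hL0 hL1.le x x' hδ
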